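/- arXiv:2012.05121 — 7 statements merged into one kernel-verified Lean document; each statement's English description precedes it below -/
import Mathlib

section
/- Let p > 3 be a prime and let n be a positive integer. Then (pn)^2 divides T_{pn} − T_n in the p-adic sense, i.e., the p-adic valuation of the integer T_{pn} − T_n is at least 2 + 2ν_p(n), where ν_p(n) is the p-adic valuation of n. -/
/-- The central trinomial coefficient: the coefficient of `x^n` in `(x^2+x+1)^n`. -/
def centralTrinomial (n : ℕ) : ℕ :=
  ∑ k ∈ Finset.range (n / 2 + 1), Nat.choose n (2 * k) * Nat.choose (2 * k) k

/-!
Write `A = 1 + X + X²` and `χ(m) = -2` if `3 ∣ m`, `χ(m) = 1` otherwise, so that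
`A'/A = 1/(1 - X) - 3X²/(1 - X³) = ∑ χ(m + 1) X^m`. Since `p ≠ 3` we have `χ(p m) = χ(m)`, so in
`W = log A - p⁻¹ log A(X^p) = ∑_{p ∤ m} χ(m) X^m / m` the terms at multiples of `p` cancel and
`W` is `p`-integral. Comparing logarithmic derivatives gives `A^{pn} = A(X^p)^n · exp(pn W)`, hence
`T_{pn} - T_n = [X^{pn}] A(X^p)^n (exp(pn W) - 1)`. Only coefficients of `exp(pn W) - 1` at
multiples of `p` enter, and these receive only the terms `(pn W)^j / j!` with `j ≥ 2`, of
valuation at least `j (1 + ν_p(n)) - ν_p(j!) ≥ 2 + 2 ν_p(n)` since `p ≠ 2`.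
-/

open Finset

theorem Finset.sum_range_succ_ite_two_dvd {M : Type*} [AddCommMonoid M] (f : ℕ → M) (n : ℕ) :
    ∑ m ∈ range (n + 1), (if 2 ∣ m then f m else 0) =
      ∑ k ∈ range (n / 2 + 1), f (2 * k) := by
  have hfilter : (range (n + 1)).filter (2 ∣ ·) =
      (range (n / 2 + 1)).map ⟨(2 * ·), mul_right_injective₀ two_ne_zero⟩ := by
    ext m
    simp only [mem_filter, mem_range, mem_map, Function.Embedding.coeFn_mk]
    constructor
    · rintro ⟨hm, k, rfl⟩
      exact ⟨k, by omega, rfl⟩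
    · rintro ⟨k, hk, rfl⟩
      exact ⟨by omega, dvd_mul_right 2 k⟩
  rw [← sum_filter, hfilter, sum_map]
  rfl

open Polynomial in
theorem Polynomial.coeff_one_add_X_add_X_sq_pow_self (R : Type*) [CommSemiring R] (n : ℕ) :
    ((1 + X + X ^ 2 : R[X]) ^ n).coeff n = centralTrinomial n := by
  have hsq : (1 + X ^ 2 : R[X]) = expand R 2 (1 + X) := by simp
  rw [add_right_comm, add_pow, finsetSum_coeff]
  simp_rw [hsq, ← map_pow, coeff_mul_natCast]
  rw [sum_congr rfl fun m hm => by
    rw [coeff_mul_X_pow', if_pos (Nat.sub_le n m), Nat.sub_sub_self (mem_range_succ_iff.mp hm),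
      coeff_expand two_pos, coeff_one_add_X_pow, ite_mul, zero_mul]]
  rw [sum_range_succ_ite_two_dvd, centralTrinomial]
  push_cast
  refine sum_congr rfl fun k _ => ?_
  rw [Nat.mul_div_cancel_left k two_pos, mul_comm]

theorem PowerSeries.coeff_one_add_X_add_X_sq_pow_self (R : Type*) [CommSemiring R] (n : ℕ) :
    coeff n ((1 + X + X ^ 2 : PowerSeries R) ^ n) = centralTrinomial n := by
  rw [← Polynomial.coeff_one_add_X_add_X_sq_pow_self, ← Polynomial.coeff_coe]
  simp

section PadicNorm

variable {p : ℕ} [hp : Fact p.Prime]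

theorem padicValNat_factorial_add_two_le (hp2 : p ≠ 2) (j : ℕ) :
    padicValNat p (j + 2).factorial ≤ j := by
  have hlt := sub_one_mul_padicValNat_factorial_lt_of_ne_zero (p := p) (n := j + 2) (by omega)
  have h2 : 2 * padicValNat p (j + 2).factorial ≤ (p - 1) * padicValNat p (j + 2).factorial :=
    Nat.mul_le_mul_right _ (by have := hp.out.two_le; omega)
  omega

namespace Padic

theorem norm_natCast_eq_inv_pow {m : ℕ} (hm : m ≠ 0) :
    ‖(m : ℚ_[p])‖ = (p : ℝ)⁻¹ ^ padicValNat p m := by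
  rw [norm_eq_zpow_neg_valuation (Nat.cast_ne_zero.mpr hm), valuation_natCast, zpow_neg,
    zpow_natCast, inv_pow]

theorem norm_natCast_le_inv_pow (m : ℕ) :
    ‖(m : ℚ_[p])‖ ≤ (p : ℝ)⁻¹ ^ padicValNat p m := by
  rcases eq_or_ne m 0 with rfl | hm
  · simp
  · exact (norm_natCast_eq_inv_pow hm).le

theorem inv_pow_le_norm_factorial_add_two (hp2 : p ≠ 2) (j : ℕ) :
    (p : ℝ)⁻¹ ^ j ≤ ‖((j + 2).factorial : ℚ_[p])‖ := by
  rw [norm_natCast_eq_inv_pow (Nat.factorial_ne_zero _)]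
  exact pow_le_pow_of_le_one (by positivity) (inv_le_one_of_one_le₀ (mod_cast hp.out.one_le))
    (padicValNat_factorial_add_two_le hp2 j)

end Padic

end PadicNorm

namespace PowerSeries

section CommRing

variable {R : Type*} [CommRing R]

theorem derivative_pow_of_derivative_eq_mul {f g : R⟦X⟧} (h : d⁄dX R f = f * g) (n : ℕ) :
    d⁄dX R (f ^ n) = f ^ n * (n * g) := by
  rw [Derivation.leibniz_pow, h, nsmul_eq_mul, smul_eq_mul]
  cases n with
  | zero => simp
  | succ n => rw [Nat.add_sub_cancel, pow_succ]; push_cast; ring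

theorem derivative_expand (p : ℕ) (hp : p ≠ 0) (f : R⟦X⟧) :
    d⁄dX R (expand p hp f) = (p : R⟦X⟧) * X ^ (p - 1) * expand p hp (d⁄dX R f) := by
  rw [expand_apply, expand_apply, derivative_subst (HasSubst.X_pow hp), Derivation.leibniz_pow,
    derivative_X, nsmul_eq_mul, smul_eq_mul, mul_one, mul_comm]

theorem coeff_pow_eq_zero_of_lt {f : R⟦X⟧} (hf : constantCoeff f = 0) {l j : ℕ}
    (hlj : l < j) :
    coeff l (f ^ j) = 0 :=
  coeff_of_lt_order l
    ((Nat.cast_lt.mpr hlj).trans_le (le_order_pow_of_constantCoeff_eq_zero j hf))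

variable [Algebra ℚ R]

theorem coeff_exp_subst {g : R⟦X⟧} (hg : constantCoeff g = 0) {l L : ℕ} (hlL : l < L) :
    coeff l ((exp R).subst g) =
      ∑ j ∈ range L, algebraMap ℚ R (j.factorial : ℚ)⁻¹ * coeff l (g ^ j) := by
  rw [coeff_subst' (HasSubst.of_constantCoeff_zero' hg),
    finsum_eq_sum_of_support_subset (s := range L)]
  · simp [coeff_exp, smul_eq_mul]
  · intro j hj
    rw [Function.mem_support] at hj
    rw [coe_range, Set.mem_Iio]
    by_contra! hLj
    exact hj (by rw [coeff_pow_eq_zero_of_lt hg (hlL.trans_le hLj), smul_zero])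

theorem constantCoeff_exp_subst {g : R⟦X⟧} (hg : constantCoeff g = 0) :
    constantCoeff ((exp R).subst g) = 1 := by
  rw [← coeff_zero_eq_constantCoeff_apply, coeff_exp_subst hg zero_lt_one]
  simp

theorem derivative_exp_subst {g : R⟦X⟧} (hg : constantCoeff g = 0) :
    d⁄dX R ((exp R).subst g) = (exp R).subst g * d⁄dX R g := by
  rw [derivative_subst (HasSubst.of_constantCoeff_zero' hg), derivative_exp]

end CommRing

theorem eq_of_derivative_eq_mul {K : Type*} [Field K] [CharZero K] {F G H : K⟦X⟧}
    (hF : d⁄dX K F = F * H) (hG : d⁄dX K G = G * H) (hG0 : constantCoeff G ≠ 0)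
    (hFG : constantCoeff F = constantCoeff G) : F = G := by
  have hGinv : G⁻¹ * G = 1 := PowerSeries.inv_mul_cancel G hG0
  have hquot : F * G⁻¹ = 1 := by
    refine derivative.ext ?_ ?_
    · rw [Derivation.leibniz, derivative_inv', hF, hG, Derivation.map_one_eq_zero, smul_eq_mul,
        smul_eq_mul]
      linear_combination (-(F * G⁻¹ * H)) * hGinv
    · rw [map_mul, constantCoeff_inv, hFG, map_one, mul_inv_cancel₀ hG0]
  calc F = F * (G⁻¹ * G) := by rw [hGinv, mul_one]
    _ = G := by rw [← mul_assoc, hquot, one_mul]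

noncomputable def trinomialLogDeriv (R : Type*) [Ring R] : R⟦X⟧ :=
  mk fun l => if 3 ∣ l + 1 then -2 else 1

/-- `log (1 + X + X²) - p⁻¹ log (1 + X^p + X^{2p})`. -/
noncomputable def trinomialLogDiff (K : Type*) [Field K] (p : ℕ) : K⟦X⟧ :=
  mk fun m => if p ∣ m then 0 else (if 3 ∣ m then -2 else 1) / m

theorem coeff_trinomialLogDiff_of_dvd {K : Type*} [Field K] {p m : ℕ} (h : p ∣ m) :
    coeff m (trinomialLogDiff K p) = 0 := by
  simp [trinomialLogDiff, h]

theorem constantCoeff_trinomialLogDiff (K : Type*) [Field K] (p : ℕ) :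
    constantCoeff (trinomialLogDiff K p) = 0 := by
  rw [← coeff_zero_eq_constantCoeff_apply, coeff_trinomialLogDiff_of_dvd (dvd_zero p)]

theorem derivative_one_add_X_add_X_sq (R : Type*) [CommRing R] :
    d⁄dX R (1 + X + X ^ 2) = (1 + X + X ^ 2) * trinomialLogDeriv R := by
  rw [pow_two]
  ext (_ | _ | l)
  · simp [trinomialLogDeriv]
  · norm_num [add_mul, coeff_succ_X_mul, trinomialLogDeriv, mul_assoc]
  · have := Nat.mod_lt l three_pos
    interval_cases h : l % 3 <;>
      norm_num [add_mul, coeff_succ_X_mul, coeff_X, trinomialLogDeriv, mul_assoc, add_assoc,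
        Nat.dvd_iff_mod_eq_zero, Nat.add_mod, h, show l + 2 ≠ 1 by omega]

theorem derivative_trinomialLogDiff {K : Type*} [Field K] [CharZero K] {p : ℕ} (hp : p ≠ 0)
    (hp3 : Nat.Coprime 3 p) :
    d⁄dX K (trinomialLogDiff K p) =
      trinomialLogDeriv K - X ^ (p - 1) * expand p hp (trinomialLogDeriv K) := by
  ext l
  rw [coeff_derivative, map_sub, coeff_X_pow_mul', coeff_expand]
  simp only [trinomialLogDiff, trinomialLogDeriv, coeff_mk]
  by_cases hpl : p ∣ l + 1
  · obtain ⟨_ | k, hk⟩ := hpl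
    · omega
    have hk' : l + 1 = p * k + p := by rw [hk, mul_add_one]
    have hl : l - (p - 1) = p * k := by omega
    rw [hk, if_pos (dvd_mul_right p _), if_pos (by omega : p - 1 ≤ l), hl,
      if_pos (dvd_mul_right p k), Nat.mul_div_cancel_left k (Nat.pos_of_ne_zero hp), zero_mul]
    simp only [hp3.dvd_mul_left, sub_self]
  · have hnot : ¬ (p - 1 ≤ l ∧ p ∣ l - (p - 1)) := by
      rintro ⟨hl, k, hk⟩
      exact hpl ⟨k + 1, by rw [mul_add_one]; omega⟩
    rw [if_neg hpl, ← ite_and, if_neg hnot, sub_zero, Nat.cast_succ,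
      div_mul_cancel₀ _ (Nat.cast_add_one_ne_zero l)]

theorem one_add_X_add_X_sq_pow_eq_expand_mul_exp_subst {K : Type*} [Field K] [CharZero K] {p : ℕ}
    (hp : p ≠ 0) (hp3 : Nat.Coprime 3 p) (n : ℕ) :
    (1 + X + X ^ 2 : K⟦X⟧) ^ (p * n) =
      expand p hp (1 + X + X ^ 2) ^ n * (exp K).subst ((p * n : K) • trinomialLogDiff K p) := by
  set A : K⟦X⟧ := 1 + X + X ^ 2
  set V := trinomialLogDeriv K
  have hA : d⁄dX K A = A * V := derivative_one_add_X_add_X_sq K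
  have hAp : d⁄dX K (expand p hp A) =
      expand p hp A * ((p : K⟦X⟧) * X ^ (p - 1) * expand p hp V) := by
    rw [derivative_expand, hA, map_mul]
    ring
  have hW : constantCoeff ((p * n : K) • trinomialLogDiff K p) = 0 := by
    simp [constantCoeff_trinomialLogDiff]
  have hc : C (p * n : K) = (p * n : K⟦X⟧) := by simp
  refine eq_of_derivative_eq_mul (H := (p * n : K⟦X⟧) * V) ?_ ?_ ?_ ?_
  · rw [derivative_pow_of_derivative_eq_mul hA]
    push_cast
    ring
  · rw [Derivation.leibniz, derivative_exp_subst hW, derivative_pow_of_derivative_eq_mul hAp,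
      Derivation.map_smul, derivative_trinomialLogDiff hp hp3, smul_eq_mul, smul_eq_mul]
    simp only [smul_eq_C_mul, hc]
    ring
  · simp [A, hp, constantCoeff_exp_subst hW]
  · simp [A, hp, constantCoeff_exp_subst hW]

theorem centralTrinomial_mul_sub_eq_coeff {K : Type*} [Field K] [CharZero K] {p : ℕ}
    (hp : p ≠ 0) (hp3 : Nat.Coprime 3 p) (n : ℕ) :
    (((centralTrinomial (p * n) : ℤ) - centralTrinomial n : ℤ) : K) =
      coeff (p * n) (expand p hp ((1 + X + X ^ 2) ^ n) *
        ((exp K).subst ((p * n : K) • trinomialLogDiff K p) - 1)) := by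
  rw [mul_sub, mul_one, map_sub, map_pow,
    ← one_add_X_add_X_sq_pow_eq_expand_mul_exp_subst hp hp3 n, ← map_pow, coeff_expand_mul,
    coeff_one_add_X_add_X_sq_pow_self, coeff_one_add_X_add_X_sq_pow_self]
  push_cast
  rfl

section Padic

variable {p : ℕ} [hp : Fact p.Prime]

noncomputable def integralPowerSeries (p : ℕ) [Fact p.Prime] : Subring ℚ_[p]⟦X⟧ :=
  (map (PadicInt.subring p).subtype).range

theorem mem_integralPowerSeries_iff {f : ℚ_[p]⟦X⟧} :
    f ∈ integralPowerSeries p ↔ ∀ m, ‖coeff m f‖ ≤ 1 := by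
  constructor
  · rintro ⟨g, rfl⟩ m
    rw [coeff_map]
    exact (coeff m g).2
  · intro h
    exact ⟨mk fun m => ⟨coeff m f, h m⟩, by ext m; simp⟩

theorem trinomialLogDiff_mem_integralPowerSeries :
    trinomialLogDiff ℚ_[p] p ∈ integralPowerSeries p := by
  refine mem_integralPowerSeries_iff.mpr fun m => ?_
  by_cases hpm : p ∣ m
  · simp [coeff_trinomialLogDiff_of_dvd hpm]
  have hm : ‖(m : ℚ_[p])‖ = 1 :=
    Padic.norm_natCast_eq_one_iff.mpr ((Nat.Prime.coprime_iff_not_dvd hp.out).mpr hpm)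
  simp only [trinomialLogDiff, coeff_mk, if_neg hpm, norm_div, hm, div_one]
  split_ifs
  · simpa using Padic.norm_int_le_one (p := p) (-2)
  · simp

theorem norm_coeff_exp_subst_smul_sub_one_le (hp2 : p ≠ 2) {W : ℚ_[p]⟦X⟧}
    (hW : W ∈ integralPowerSeries p) (hW0 : constantCoeff W = 0) {c : ℚ_[p]} {k : ℕ}
    (hc : ‖c‖ ≤ (p : ℝ)⁻¹ ^ (k + 1)) {l : ℕ} (hl : coeff l W = 0) :
    ‖coeff l ((exp ℚ_[p]).subst (c • W) - 1)‖ ≤ (p : ℝ)⁻¹ ^ (2 * (k + 1)) := by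
  have hcW : constantCoeff (c • W) = 0 := by simp [hW0]
  rw [map_sub, coeff_exp_subst hcW (L := l + 2) (by omega), sum_range_succ', sum_range_succ']
  have h1 : coeff l ((c • W) ^ (0 + 1)) = 0 := by simp [hl]
  simp only [h1, mul_zero, add_zero, Nat.factorial_zero, Nat.cast_one, inv_one, map_one, one_mul,
    pow_zero, add_sub_cancel_right]
  set q : ℝ := (p : ℝ)⁻¹
  have hq0 : 0 < q := inv_pos.mpr (mod_cast hp.out.pos)
  have hq1 : q ≤ 1 := inv_le_one_of_one_le₀ (mod_cast hp.out.one_le)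
  refine IsUltrametricDist.norm_sum_le_of_forall_le_of_nonneg (by positivity) fun j _ => ?_
  rw [smul_pow, coeff_smul, smul_eq_mul, norm_mul, norm_mul, norm_pow, map_inv₀, map_natCast,
    norm_inv]
  calc ‖((j + 2).factorial : ℚ_[p])‖⁻¹ * (‖c‖ ^ (j + 2) * ‖coeff l (W ^ (j + 2))‖)
      ≤ (q ^ j)⁻¹ * ((q ^ (k + 1)) ^ (j + 2) * 1) := by
        gcongr
        · exact Padic.inv_pow_le_norm_factorial_add_two hp2 j
        · exact mem_integralPowerSeries_iff.mp (pow_mem hW _) l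
    _ = q ^ (2 * (k + 1)) * q ^ (k * j) := by
        rw [mul_one, ← pow_mul, show (k + 1) * (j + 2) = j + (2 * (k + 1) + k * j) by ring,
          pow_add, inv_mul_cancel_left₀ (pow_ne_zero _ hq0.ne'), pow_add]
    _ ≤ q ^ (2 * (k + 1)) := mul_le_of_le_one_right (by positivity) (pow_le_one₀ hq0.le hq1)

theorem norm_coeff_expand_mul_le {f g : ℚ_[p]⟦X⟧} (hf : f ∈ integralPowerSeries p) {r : ℝ}
    (hr : 0 ≤ r) (hg : ∀ l, p ∣ l → ‖coeff l g‖ ≤ r) (m : ℕ) :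
    ‖coeff (p * m) (expand p hp.out.ne_zero f * g)‖ ≤ r := by
  rw [coeff_mul]
  refine IsUltrametricDist.norm_sum_le_of_forall_le_of_nonneg hr fun ⟨i, l⟩ hil => ?_
  rw [HasAntidiagonal.mem_antidiagonal] at hil
  dsimp only
  rw [coeff_expand, norm_mul]
  split_ifs with hpi
  · have hpl : p ∣ l := (Nat.dvd_add_right hpi).mp (hil ▸ dvd_mul_right p m)
    calc ‖coeff (i / p) f‖ * ‖coeff l g‖ ≤ 1 * r :=
          mul_le_mul (mem_integralPowerSeries_iff.mp hf _) (hg l hpl) (norm_nonneg _) zero_le_one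
      _ = r := one_mul r
  · simpa using hr

end Padic

end PowerSeries

open PowerSeries in
theorem trinomial_pn_sub_n_divisibility_general (p : ℕ) (hp : p.Prime) (hp3 : 3 < p)
    (n : ℕ) :
    (p : ℤ) ^ (2 + 2 * padicValNat p n) ∣
      (centralTrinomial (p * n) : ℤ) - centralTrinomial n := by
  have := Fact.mk hp
  have hcop : Nat.Coprime 3 p := (Nat.coprime_primes Nat.prime_three hp).mpr (by omega)
  have hc : ‖(p * n : ℚ_[p])‖ ≤ (p : ℝ)⁻¹ ^ (padicValNat p n + 1) := by
    rw [norm_mul, Padic.norm_p, pow_succ']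
    exact mul_le_mul_of_nonneg_left (Padic.norm_natCast_le_inv_pow n) (by positivity)
  have hE (l : ℕ) (hl : p ∣ l) :
      ‖coeff l ((exp ℚ_[p]).subst ((p * n : ℚ_[p]) • trinomialLogDiff ℚ_[p] p) - 1)‖ ≤
        (p : ℝ)⁻¹ ^ (2 * (padicValNat p n + 1)) :=
    norm_coeff_exp_subst_smul_sub_one_le (by omega) trinomialLogDiff_mem_integralPowerSeries
      (constantCoeff_trinomialLogDiff _ p) hc (coeff_trinomialLogDiff_of_dvd hl)
  have hA : (1 + X + X ^ 2 : ℚ_[p]⟦X⟧) ∈ integralPowerSeries p :=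
    ⟨1 + X + X ^ 2, by simp⟩
  have hbound := norm_coeff_expand_mul_le (pow_mem hA n) (by positivity) hE n
  rw [← centralTrinomial_mul_sub_eq_coeff hp.ne_zero hcop n] at hbound
  refine (Padic.norm_int_le_pow_iff_dvd _ _).mp ?_
  rw [zpow_neg, zpow_natCast, ← inv_pow]
  convert hbound using 2
  ring

theorem trinomial_pn_sub_n_divisibility (p : ℕ) (hp : p.Prime) (hp3 : 3 < p)
    (n : ℕ) (hn : 0 < n) :
    (p : ℤ) ^ (2 + 2 * padicValNat p n) ∣
      (centralTrinomial (p * n) : ℤ) - centralTrinomial n :=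
  trinomial_pn_sub_n_divisibility_general p hp hp3 n
end

section
/- For any prime p > 3 and any positive integer a, one has T_{p^a} ≡ 1 (mod p^2). -/
open Polynomial

namespace Polynomial

theorem natCast_pow_dvd_coeff {R : Type*} [Semiring R] {n k : ℕ} {f : R[X]}
    (h : (n : R[X]) ^ k ∣ f) (i : ℕ) : (n : R) ^ k ∣ f.coeff i := by
  rw [← Nat.cast_pow, ← C_eq_natCast, C_dvd_iff_dvd_coeff] at h
  exact_mod_cast h i

theorem natCast_dvd_pow_sub_expand {p : ℕ} (hp : p.Prime) (f : ℤ[X]) :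
    (p : ℤ[X]) ∣ f ^ p - expand ℤ p f := by
  have : Fact p.Prime := ⟨hp⟩
  have hmod : (f ^ p - expand ℤ p f).map (Int.castRingHom (ZMod p)) = 0 := by
    simp [map_expand, ZMod.expand_card]
  rw [← C_eq_natCast, C_dvd_iff_dvd_coeff]
  intro n
  rw [← ZMod.intCast_zmod_eq_zero_iff_dvd, ← eq_intCast (Int.castRingHom (ZMod p)), ← coeff_map,
    hmod, coeff_zero]

theorem natCast_pow_dvd_pow_prime_pow_sub_expand {p : ℕ} (hp : p.Prime) (f : ℤ[X]) (k : ℕ) :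
    (p : ℤ[X]) ^ (k + 1) ∣ f ^ p ^ (k + 1) - expand ℤ p (f ^ p ^ k) := by
  simpa only [← pow_mul, ← pow_succ', map_pow] using
    dvd_sub_pow_of_dvd_sub (natCast_dvd_pow_sub_expand hp f) k

theorem coeff_pow_prime_pow_succ_modEq {p : ℕ} (hp : p.Prime) (f : ℤ[X]) (k n : ℕ) :
    (f ^ p ^ (k + 1)).coeff (p * n) ≡ (f ^ p ^ k).coeff n [ZMOD p ^ (k + 1)] := by
  have h := natCast_pow_dvd_coeff (natCast_pow_dvd_pow_prime_pow_sub_expand hp f k) (p * n)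
  rw [coeff_sub, coeff_expand_mul' hp.pos] at h
  exact (Int.modEq_iff_dvd.mpr h).symm

theorem pow_sub_expand_of_mul_eq_expand {R : Type*} [CommRing R] (p q : ℕ) {f g : R[X]}
    (hfg : f * g = expand R q g) :
    (f ^ p - expand R p f) * expand R p g + (g ^ p - expand R p g) * expand R p f +
      (f ^ p - expand R p f) * (g ^ p - expand R p g) = expand R q (g ^ p - expand R p g) := by
  have hpow : f ^ p * g ^ p = expand R q g ^ p := by rw [← mul_pow, hfg]
  have hexpand : expand R p f * expand R p g = expand R q (expand R p g) := by
    rw [← map_mul, hfg, expand_expand, expand_expand, mul_comm]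
  rw [map_sub, map_pow]
  linear_combination hpow - hexpand

end Polynomial

theorem coeff_X_sq_pow_mul_one_add_X_pow (n k : ℕ) :
    ((X ^ 2 : ℤ[X]) ^ k * (1 + X) ^ (n - k) * (n.choose k : ℤ[X])).coeff n =
      ((n.choose (2 * k) * (2 * k).choose k : ℕ) : ℤ) := by
  rw [← C_eq_natCast, coeff_mul_C, ← pow_mul, coeff_X_pow_mul', coeff_one_add_X_pow]
  split_ifs with h
  · rw [Nat.choose_mul (Nat.le_mul_of_pos_left k two_pos), two_mul, Nat.add_sub_cancel,
      Nat.choose_symm_of_eq_add (show n - k = n - (k + k) + k by omega)]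
    push_cast
    ring
  · rw [Nat.choose_eq_zero_of_lt (not_le.mp h), Nat.zero_mul, Nat.cast_zero, zero_mul]

theorem centralTrinomial_eq_coeff (n : ℕ) :
    (centralTrinomial n : ℤ) = ((1 + X + X ^ 2 : ℤ[X]) ^ n).coeff n := by
  rw [show (1 + X + X ^ 2 : ℤ[X]) = X ^ 2 + (1 + X) by ring, add_pow, finsetSum_coeff,
    Finset.sum_congr rfl fun k _ => coeff_X_sq_pow_mul_one_add_X_pow n k, centralTrinomial,
    Nat.cast_sum]
  refine Finset.sum_subset (Finset.range_subset_range.mpr (by omega)) fun k _ hk => ?_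
  rw [Finset.mem_range] at hk
  rw [Nat.choose_eq_zero_of_lt (by omega), zero_mul, Nat.cast_zero]

theorem centralTrinomial_prime_pow_succ_modEq {p : ℕ} (hp : p.Prime) (k : ℕ) :
    (centralTrinomial (p ^ (k + 1)) : ℤ) ≡ centralTrinomial (p ^ k) [ZMOD p ^ (k + 1)] := by
  simpa only [centralTrinomial_eq_coeff, ← pow_succ'] using
    coeff_pow_prime_pow_succ_modEq hp (1 + X + X ^ 2) k (p ^ k)

theorem centralTrinomial_prime_pow_modEq {p a : ℕ} (hp : p.Prime) (ha : 0 < a) :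
    (centralTrinomial (p ^ a) : ℤ) ≡ centralTrinomial p [ZMOD p ^ 2] := by
  induction a, ha using Nat.le_induction with
  | base => rw [pow_one]
  | succ k hk ih =>
    exact ((centralTrinomial_prime_pow_succ_modEq hp k).of_dvd (pow_dvd_pow _ (by omega))).trans ih

theorem centralTrinomial_prime_modEq_one {p : ℕ} (hp : p.Prime) (hp3 : 3 < p) :
    (centralTrinomial p : ℤ) ≡ 1 [ZMOD p ^ 2] := by
  set f : ℤ[X] := 1 + X + X ^ 2
  set g : ℤ[X] := X + C (-1)
  set Q := f ^ p - expand ℤ p f with hQ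
  set R := g ^ p - expand ℤ p g with hR
  have hFf : expand ℤ p f = 1 + X ^ p + X ^ (2 * p) := by simp [f, ← pow_mul, mul_comm]
  have hFg : expand ℤ p g = X ^ p - 1 := by simp [g, sub_eq_add_neg]
  have hQ0 : Q.coeff 0 = 0 := by simp [hQ, f, coeff_zero_eq_eval_zero, zero_pow hp.ne_zero]
  have hR0 : R.coeff 0 = 0 := by
    rw [hR, coeff_sub, coeff_X_add_C_pow, hFg]
    simp [hp.pos.ne, (hp.odd_of_ne_two (by omega)).neg_one_pow]
  have hRp : R.coeff p = 0 := by
    rw [hR, coeff_sub, coeff_X_add_C_pow, hFg]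
    simp [coeff_one, hp.ne_zero]
  have h3p : ¬ 3 ∣ p := fun h =>
    absurd ((Nat.prime_dvd_prime_iff_eq Nat.prime_three hp).mp h) (by omega)
  have hQRp : Q.coeff p = (Q * R).coeff p := by
    have h := congrArg (coeff · p) <| pow_sub_expand_of_mul_eq_expand p 3 (f := f) (g := g)
      (by simp [f, g]; ring)
    rw [← hQ, ← hR] at h
    simp only [hFg, hFf, mul_sub, mul_one, mul_add, coeff_add, coeff_sub, coeff_mul_X_pow',
      le_refl, if_true, if_neg (show ¬ 2 * p ≤ p by omega), Nat.sub_self, coeff_expand three_pos,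
      if_neg h3p, hQ0, hR0, hRp] at h
    linarith
  have hQp : Q.coeff p = centralTrinomial p - 1 := by
    rw [hQ, coeff_sub, ← centralTrinomial_eq_coeff, hFf]
    simp [coeff_X_pow, coeff_one, hp.ne_zero]
  have hp2 : (p : ℤ) ^ 2 ∣ (Q * R).coeff p := by
    refine natCast_pow_dvd_coeff ?_ p
    rw [pow_two]
    exact mul_dvd_mul (natCast_dvd_pow_sub_expand hp f) (natCast_dvd_pow_sub_expand hp g)
  refine (Int.modEq_iff_dvd.mpr ?_).symm
  rwa [← hQp, hQRp]

theorem trinomial_prime_power_cong_one (p : ℕ) (hp : p.Prime) (hp3 : 3 < p)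
    (a : ℕ) (ha : 0 < a) :
    (centralTrinomial (p ^ a) : ℤ) ≡ 1 [ZMOD (p ^ 2)] :=
  (centralTrinomial_prime_pow_modEq hp ha).trans (centralTrinomial_prime_modEq_one hp hp3)
end

section
/- Let p > 3 be a prime. Then Σ_{0<k<p, 3 | (k+p)} 1/k^2 ≡ −(1/9) · (p/3) · B_{p−2}(1/3) (mod p), where the sum ranges over integers k with 0 < k < p and k + p divisible by 3, i.e., the p-adic valuation of the rational number Σ_{0<k<p, 3|(k+p)} 1/k^2 + (1/9)(p/3)B_{p−2}(1/3) is at least 1. -/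
/-!
By Fermat, `1/k² ≡ k^(p-3) (mod p)`. The `k` in the sum are `t, t + 3, …, t + 3(n - 1)` with
`t ∈ {1, 2}` and `2t + 3n = p + 3`, so summing the power over this progression gives
`(p - 2) ∑ k^(p-3) = 3^(p-3) (B_{p-2}(t/3 + n) - B_{p-2}(t/3))`, where `t/3 + n = 1 - t/3 + p/3`.
By von Staudt–Clausen the coefficients of `B_{p-2}` are `p`-integral, so the shift by `p/3` can be
dropped; the reflection `B_{p-2}(1 - x) = -B_{p-2}(x)` and `3^(p-1) ≡ 1` then give
`∑ k^(p-3) ≡ B_{p-2}(t/3)/9`, and `B_{p-2}(t/3) = -(p/3) B_{p-2}(1/3)`.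
-/

open Finset
open scoped Polynomial

section Ultrametric

variable {K : Type*} [NormedField K] [IsUltrametricDist K]

theorem norm_pow_sub_pow_le {x y : K} (hx : ‖x‖ ≤ 1) (hy : ‖y‖ ≤ 1) (i : ℕ) :
    ‖x ^ i - y ^ i‖ ≤ ‖x - y‖ := by
  rw [← geom_sum₂_mul, norm_mul]
  refine mul_le_of_le_one_left (norm_nonneg _) ?_
  refine IsUltrametricDist.norm_sum_le_of_forall_le_of_nonneg zero_le_one fun j _ => ?_
  rw [norm_mul, norm_pow, norm_pow]
  exact mul_le_one₀ (pow_le_one₀ (norm_nonneg _) hx) (by positivity)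
    (pow_le_one₀ (norm_nonneg _) hy)

namespace Polynomial

theorem norm_eval_le_one {f : K[X]} (hf : ∀ i, ‖f.coeff i‖ ≤ 1) {x : K} (hx : ‖x‖ ≤ 1) :
    ‖f.eval x‖ ≤ 1 := by
  rw [eval_eq_sum_range]
  refine IsUltrametricDist.norm_sum_le_of_forall_le_of_nonneg zero_le_one fun i _ => ?_
  rw [norm_mul, norm_pow]
  exact mul_le_one₀ (hf i) (by positivity) (pow_le_one₀ (norm_nonneg _) hx)

theorem norm_eval_sub_eval_le {f : K[X]} (hf : ∀ i, ‖f.coeff i‖ ≤ 1) {x y : K}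
    (hx : ‖x‖ ≤ 1) (hy : ‖y‖ ≤ 1) : ‖f.eval x - f.eval y‖ ≤ ‖x - y‖ := by
  rw [eval_eq_sum_range, eval_eq_sum_range, ← sum_sub_distrib]
  refine IsUltrametricDist.norm_sum_le_of_forall_le_of_nonneg (norm_nonneg _) fun i _ => ?_
  rw [← mul_sub, norm_mul]
  exact (mul_le_mul (hf i) (norm_pow_sub_pow_le hx hy i) (norm_nonneg _) zero_le_one).trans_eq
    (one_mul _)

end Polynomial

end Ultrametric

namespace Polynomial

theorem bernoulli_eval_one_sub_of_odd {m : ℕ} (hm : Odd m) (x : ℚ) :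
    (bernoulli m).eval (1 - x) = -(bernoulli m).eval x := by
  rw [bernoulli_eval_one_sub, hm.neg_one_pow, neg_one_mul]

theorem bernoulli_succ_eval_add_natCast (m : ℕ) (x : ℚ) (n : ℕ) :
    (bernoulli (m + 1)).eval (x + n) =
      (bernoulli (m + 1)).eval x + (m + 1) * ∑ j ∈ range n, (x + j) ^ m := by
  induction n with
  | zero => simp
  | succ n ih =>
    rw [Nat.cast_succ, show x + (n + 1) = 1 + (x + n) by ring, bernoulli_eval_one_add, ih,
      sum_range_succ, Nat.add_sub_cancel]
    push_cast
    ring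

theorem sum_range_add_mul_pow (m n : ℕ) (a : ℚ) {d : ℚ} (hd : d ≠ 0) :
    (m + 1) * ∑ j ∈ range n, (a + d * j) ^ m =
      d ^ m * ((bernoulli (m + 1)).eval (a / d + n) - (bernoulli (m + 1)).eval (a / d)) := by
  rw [bernoulli_succ_eval_add_natCast, add_sub_cancel_left, mul_left_comm]
  congr 1
  rw [Finset.mul_sum]
  refine Finset.sum_congr rfl fun j _ => ?_
  rw [← mul_pow]
  congr 1
  field_simp

/-- When `m + 3` is a prime `p > 3` and `2t + 3n = p + 3`, both terms on the right are `≡ 0 mod p`: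
the two Bernoulli arguments differ by `p/3`, and `3^(p-1) ≡ 1`. -/
theorem nine_mul_sum_range_pow_sub_bernoulli_eval_eq {m : ℕ} (hm : Odd (m + 1)) (t n : ℕ) :
    9 * (m + 1) * (∑ j ∈ range n, ((t + 3 * j : ℕ) : ℚ) ^ m -
        (bernoulli (m + 1)).eval ((t : ℚ) / 3) / 9) =
      3 ^ (m + 2) * ((bernoulli (m + 1)).eval ((t : ℚ) / 3 + n) -
          (bernoulli (m + 1)).eval (1 - (t : ℚ) / 3)) -
        (2 * (3 ^ (m + 2) - 1) + (m + 3)) * (bernoulli (m + 1)).eval ((t : ℚ) / 3) := by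
  have hpow := sum_range_add_mul_pow m n (t : ℚ) three_ne_zero
  rw [bernoulli_eval_one_sub_of_odd hm]
  push_cast
  linear_combination 9 * hpow

end Polynomial

namespace Padic

variable {p : ℕ} [Fact p.Prime]

theorem norm_intCast_le_inv_of_dvd {k : ℤ} (h : (p : ℤ) ∣ k) : ‖(k : ℚ_[p])‖ ≤ (p : ℝ)⁻¹ := by
  obtain ⟨m, rfl⟩ := h
  rw [Int.cast_mul, norm_mul, Int.cast_natCast, norm_p]
  exact mul_le_of_le_one_right (by positivity) (norm_int_le_one m)

theorem norm_natCast_eq_one_of_lt {q : ℕ} (hq0 : 0 < q) (hqp : q < p) : ‖(q : ℚ_[p])‖ = 1 := by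
  rw [norm_natCast_eq_one_iff, Nat.Prime.coprime_iff_not_dvd Fact.out]
  exact Nat.not_dvd_of_pos_of_lt hq0 hqp

theorem norm_three (hp : p ≠ 3) : ‖(3 : ℚ_[p])‖ = 1 := by
  rw [← Nat.cast_ofNat, norm_natCast_eq_one_iff]
  exact (Nat.coprime_primes Fact.out Nat.prime_three).mpr hp

theorem norm_natCast_pow_sub_one_sub_one_le {k : ℕ} (hk : ¬ p ∣ k) :
    ‖(k : ℚ_[p]) ^ (p - 1) - 1‖ ≤ (p : ℝ)⁻¹ := by
  have hcop : IsCoprime (k : ℤ) p := Nat.isCoprime_iff_coprime.mpr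
    (Nat.coprime_comm.mp ((Nat.Prime.coprime_iff_not_dvd Fact.out).mpr hk))
  exact_mod_cast norm_intCast_le_inv_of_dvd (Int.ModEq.pow_card_sub_one_eq_one Fact.out hcop).symm.dvd

theorem norm_two_mul_three_pow_sub_one_add_le (hp : p ≠ 3) :
    ‖2 * ((3 : ℚ_[p]) ^ (p - 1) - 1) + p‖ ≤ (p : ℝ)⁻¹ := by
  have h3 : ¬ p ∣ 3 := fun h => hp ((Nat.prime_dvd_prime_iff_eq Fact.out Nat.prime_three).mp h)
  refine (IsUltrametricDist.norm_add_le_max _ _).trans (max_le ?_ norm_p.le)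
  have hfermat := norm_natCast_pow_sub_one_sub_one_le h3
  rw [Nat.cast_ofNat] at hfermat
  rw [norm_mul]
  exact (mul_le_mul (mod_cast norm_int_le_one 2) hfermat (norm_nonneg _) zero_le_one).trans_eq
    (one_mul _)

theorem norm_one_div_sq_sub_pow_le (hp : 3 ≤ p) {k : ℕ} (hk : ¬ p ∣ k) :
    ‖1 / (k : ℚ_[p]) ^ 2 - (k : ℚ_[p]) ^ (p - 3)‖ ≤ (p : ℝ)⁻¹ := by
  have hk1 : ‖(k : ℚ_[p])‖ = 1 := by
    rwa [norm_natCast_eq_one_iff, Nat.Prime.coprime_iff_not_dvd Fact.out]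
  have hk0 : (k : ℚ_[p]) ≠ 0 := norm_ne_zero_iff.mp (by rw [hk1]; exact one_ne_zero)
  have : 1 / (k : ℚ_[p]) ^ 2 - (k : ℚ_[p]) ^ (p - 3) = -((k : ℚ_[p]) ^ (p - 1) - 1) / k ^ 2 := by
    rw [show p - 1 = p - 3 + 2 by omega, pow_add]
    field_simp
    ring
  rw [this, norm_div, norm_neg, norm_pow, hk1, one_pow, div_one]
  exact norm_natCast_pow_sub_one_sub_one_le hk

theorem norm_sum_one_div_sq_sub_pow_le (hp : 3 ≤ p) {s : Finset ℕ} (hs : ∀ k ∈ s, ¬ p ∣ k) :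
    ‖((∑ k ∈ s, (1 / (k : ℚ) ^ 2 - (k : ℚ) ^ (p - 3)) : ℚ) : ℚ_[p])‖ ≤ (p : ℝ)⁻¹ := by
  rw [Rat.cast_sum]
  refine IsUltrametricDist.norm_sum_le_of_forall_le_of_nonneg (by positivity) fun k hk => ?_
  push_cast
  exact norm_one_div_sq_sub_pow_le hp (hs k hk)

/-- By von Staudt–Clausen, the primes dividing the denominator of `B_{2k}` are at most `2k + 1`. -/
theorem norm_bernoulli_le_one {i : ℕ} (hi : i + 1 < p) : ‖((bernoulli i : ℚ) : ℚ_[p])‖ ≤ 1 := by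
  obtain ⟨k, rfl | rfl⟩ := Nat.even_or_odd' i
  · obtain ⟨z, hz⟩ := Bernoulli.vonStaudt_clausen k
    rw [eq_sub_of_add_eq hz.symm]
    push_cast
    rw [sub_eq_add_neg]
    refine (IsUltrametricDist.norm_add_le_max _ _).trans (max_le (norm_int_le_one z) ?_)
    rw [norm_neg]
    refine IsUltrametricDist.norm_sum_le_of_forall_le_of_nonneg zero_le_one fun q hq => ?_
    obtain ⟨hqlt, hqprime, -⟩ := by simpa only [mem_filter, mem_range] using hq
    rw [norm_div, norm_one, norm_natCast_eq_one_of_lt hqprime.pos (by omega), div_one]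
  · rcases k.eq_zero_or_pos with rfl | hk
    · rw [_root_.bernoulli_one]
      push_cast
      rw [norm_div, norm_neg, norm_one, ← Nat.cast_ofNat,
        norm_natCast_eq_one_of_lt two_pos (by omega)]
      norm_num
    · rw [bernoulli_eq_zero_of_odd (odd_two_mul_add_one k) (by omega)]
      simp

theorem ratCast_eval (f : ℚ[X]) (x : ℚ) :
    ((f.eval x : ℚ) : ℚ_[p]) = (f.map (Rat.castHom ℚ_[p])).eval (x : ℚ_[p]) := by
  rw [Polynomial.eval_map, ← Rat.coe_castHom, Polynomial.eval₂_at_apply]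

theorem norm_coeff_bernoulli_le_one {n : ℕ} (hn : n + 1 < p) (i : ℕ) :
    ‖((Polynomial.bernoulli n).map (Rat.castHom ℚ_[p])).coeff i‖ ≤ 1 := by
  rw [Polynomial.coeff_map, Polynomial.coeff_bernoulli]
  split_ifs with hi
  · rw [map_mul, norm_mul, map_natCast]
    exact mul_le_one₀ (norm_bernoulli_le_one (by omega)) (norm_nonneg _)
      (mod_cast norm_int_le_one _)
  · simp

theorem norm_bernoulli_eval_le_one {n : ℕ} (hn : n + 1 < p) {x : ℚ} (hx : ‖(x : ℚ_[p])‖ ≤ 1) :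
    ‖(((Polynomial.bernoulli n).eval x : ℚ) : ℚ_[p])‖ ≤ 1 := by
  rw [ratCast_eval]
  exact Polynomial.norm_eval_le_one (norm_coeff_bernoulli_le_one hn) hx

theorem norm_bernoulli_eval_sub_le {n : ℕ} (hn : n + 1 < p) {x y : ℚ}
    (hx : ‖(x : ℚ_[p])‖ ≤ 1) (hy : ‖(y : ℚ_[p])‖ ≤ 1) :
    ‖(((Polynomial.bernoulli n).eval x : ℚ) : ℚ_[p]) - (Polynomial.bernoulli n).eval y‖ ≤
      ‖((x - y : ℚ) : ℚ_[p])‖ := by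
  rw [Rat.cast_sub, ratCast_eval, ratCast_eval]
  exact Polynomial.norm_eval_sub_eval_le (norm_coeff_bernoulli_le_one hn) hx hy

theorem norm_natCast_div_three_le_one (hp : p ≠ 3) (k : ℕ) : ‖(((k : ℚ) / 3 : ℚ) : ℚ_[p])‖ ≤ 1 := by
  push_cast
  rw [norm_div, norm_three hp, div_one]
  exact_mod_cast norm_int_le_one k

theorem norm_bernoulli_eval_add_sub_eval_one_sub_le (hp : 3 < p) {t n : ℕ}
    (htn : 2 * t + 3 * n = p + 3) :
    ‖(((Polynomial.bernoulli (p - 2)).eval ((t : ℚ) / 3 + n) : ℚ) : ℚ_[p]) -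
        (Polynomial.bernoulli (p - 2)).eval (1 - (t : ℚ) / 3)‖ ≤ (p : ℝ)⁻¹ := by
  have ht := norm_natCast_div_three_le_one (p := p) (by omega) t
  have hx : ‖(((t : ℚ) / 3 + n : ℚ) : ℚ_[p])‖ ≤ 1 := by
    rw [Rat.cast_add]
    exact (IsUltrametricDist.norm_add_le_max _ _).trans (max_le ht (mod_cast norm_int_le_one n))
  have hy : ‖((1 - (t : ℚ) / 3 : ℚ) : ℚ_[p])‖ ≤ 1 := by
    rw [Rat.cast_sub, sub_eq_add_neg]
    exact (IsUltrametricDist.norm_add_le_max _ _).trans (max_le (by simp) (by rwa [norm_neg]))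
  have hxy : (t : ℚ) / 3 + n - (1 - (t : ℚ) / 3) = (p : ℚ) / 3 := by
    have htn' : (2 * t + 3 * n : ℚ) = p + 3 := by exact_mod_cast htn
    linear_combination htn' / 3
  refine (norm_bernoulli_eval_sub_le (by omega) hx hy).trans ?_
  rw [hxy, Rat.cast_div, norm_div, Rat.cast_ofNat, norm_three (by omega), div_one,
    Rat.cast_natCast, norm_p]

theorem norm_sum_range_pow_sub_bernoulli_eval_le (hp : 3 < p) {t n : ℕ}
    (htn : 2 * t + 3 * n = p + 3) :
    ‖((∑ j ∈ range n, ((t + 3 * j : ℕ) : ℚ) ^ (p - 3) -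
        (Polynomial.bernoulli (p - 2)).eval ((t : ℚ) / 3) / 9 : ℚ) : ℚ_[p])‖ ≤ (p : ℝ)⁻¹ := by
  have hshift := norm_bernoulli_eval_add_sub_eval_one_sub_le hp htn
  obtain ⟨m, rfl⟩ : ∃ m, p = m + 3 := ⟨p - 3, by omega⟩
  simp only [show m + 3 - 3 = m from rfl, show m + 3 - 2 = m + 1 from rfl] at hshift ⊢
  have hodd : Odd (m + 1) := by
    have := Nat.odd_iff.mp ((Fact.out : (m + 3).Prime).odd_of_ne_two (by omega))
    exact Nat.odd_iff.mpr (by omega)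
  have hthree : ‖(3 : ℚ_[m + 3])‖ = 1 := norm_three (by omega)
  have hunit : ‖((9 * (m + 1) : ℚ) : ℚ_[m + 3])‖ = 1 := by
    rw [show (9 * (m + 1) : ℚ) = 3 ^ 2 * ((m + 1 : ℕ) : ℚ) by push_cast; ring]
    push_cast
    rw [norm_mul, norm_pow, hthree, one_pow, one_mul]
    exact_mod_cast norm_natCast_eq_one_of_lt (p := m + 3) (q := m + 1) (by omega) (by omega)
  have hfermat : ‖((2 * (3 ^ (m + 2) - 1) + (m + 3) : ℚ) : ℚ_[m + 3])‖ ≤ ((m + 3 : ℕ) : ℝ)⁻¹ := by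
    have := norm_two_mul_three_pow_sub_one_add_le (p := m + 3) (by omega)
    push_cast at this ⊢
    exact this
  rw [← one_mul ‖_‖, ← hunit, ← norm_mul, ← Rat.cast_mul,
    Polynomial.nine_mul_sum_range_pow_sub_bernoulli_eval_eq hodd, Rat.cast_sub, sub_eq_add_neg,
    Rat.cast_mul, Rat.cast_mul, Rat.cast_sub]
  refine (IsUltrametricDist.norm_add_le_max _ _).trans (max_le ?_ ?_)
  · rwa [norm_mul, Rat.cast_pow, Rat.cast_ofNat, norm_pow, hthree, one_pow, one_mul]
  · rw [norm_neg, norm_mul]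
    exact (mul_le_mul hfermat (norm_bernoulli_eval_le_one (by omega)
      (norm_natCast_div_three_le_one (by omega) t)) (norm_nonneg _) (by positivity)).trans_eq
      (mul_one _)

end Padic

theorem exists_two_mul_add_three_mul_eq {p : ℕ} (hp : ¬ 3 ∣ p) :
    ∃ t n : ℕ, (t = 1 ∨ t = 2) ∧ 2 * t + 3 * n = p + 3 :=
  ⟨3 - p % 3, (p + 2 * (p % 3) - 3) / 3, by omega, by omega⟩

theorem filter_Ioo_three_dvd_add_eq_image {p t n : ℕ} (ht : t = 1 ∨ t = 2)
    (htn : 2 * t + 3 * n = p + 3) :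
    (Ioo 0 p).filter (fun k => 3 ∣ k + p) = (range n).image (fun j => t + 3 * j) := by
  ext k
  simp only [mem_filter, mem_Ioo, mem_image, mem_range]
  constructor
  · rintro ⟨⟨hk0, hkp⟩, hdvd⟩
    exact ⟨k / 3, by omega, by omega⟩
  · rintro ⟨j, hj, rfl⟩
    omega

theorem legendreSym_three_mul_bernoulli_eval {p : ℕ} [Fact p.Prime] {m : ℕ} (hm : Odd m) {t : ℕ}
    (ht : t = 1 ∨ t = 2) (htp : 3 ∣ t + p) :
    (legendreSym 3 p : ℚ) * (Polynomial.bernoulli m).eval (1 / 3) =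
      -(Polynomial.bernoulli m).eval ((t : ℚ) / 3) := by
  rw [legendreSym.mod]
  rcases ht with rfl | rfl
  · rw [show (p : ℤ) % (3 : ℕ) = 2 by omega]
    simp [show legendreSym 3 2 = -1 by decide]
  · rw [show (p : ℤ) % (3 : ℕ) = 1 by omega, ← Polynomial.bernoulli_eval_one_sub_of_odd hm]
    norm_num

theorem sum_inv_sq_three_dvd_congruence (p : ℕ) [hp : Fact p.Prime] (hp3 : 3 < p) :
    ‖(((∑ k ∈ (Finset.Ioo 0 p).filter (fun k => 3 ∣ k + p), (1 : ℚ) / (k : ℚ) ^ 2)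
        + 1 / 9 * (legendreSym 3 p : ℚ)
            * (Polynomial.bernoulli (p - 2)).eval (1 / 3 : ℚ) : ℚ) : ℚ_[p])‖
      ≤ ((p : ℝ))⁻¹ := by
  have hndvd : ¬ 3 ∣ p := fun h => by
    have := (Nat.prime_dvd_prime_iff_eq Nat.prime_three hp.out).mp h
    omega
  obtain ⟨t, n, ht, htn⟩ := exists_two_mul_add_three_mul_eq hndvd
  have hodd : Odd (p - 2) := Nat.odd_iff.mpr (by
    have := Nat.odd_iff.mp (hp.out.odd_of_ne_two (by omega))
    omega)
  set F := (Finset.Ioo 0 p).filter (fun k => 3 ∣ k + p)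
  have hprog : ∑ k ∈ F, (k : ℚ) ^ (p - 3) = ∑ j ∈ range n, ((t + 3 * j : ℕ) : ℚ) ^ (p - 3) := by
    rw [show F = _ from filter_Ioo_three_dvd_add_eq_image ht htn, sum_image fun i _ j _ h => by omega]
  have hsplit : ∑ k ∈ F, (1 : ℚ) / (k : ℚ) ^ 2
        + 1 / 9 * (legendreSym 3 p : ℚ) * (Polynomial.bernoulli (p - 2)).eval (1 / 3 : ℚ) =
      ∑ k ∈ F, (1 / (k : ℚ) ^ 2 - (k : ℚ) ^ (p - 3)) +
        (∑ j ∈ range n, ((t + 3 * j : ℕ) : ℚ) ^ (p - 3) -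
          (Polynomial.bernoulli (p - 2)).eval ((t : ℚ) / 3) / 9) := by
    rw [sum_sub_distrib, hprog, mul_assoc, legendreSym_three_mul_bernoulli_eval hodd ht (by omega)]
    ring
  have hF : ∀ k ∈ F, ¬ p ∣ k := fun k hk => by
    simp only [F, mem_filter, mem_Ioo] at hk
    exact Nat.not_dvd_of_pos_of_lt hk.1.1 hk.1.2
  rw [hsplit, Rat.cast_add]
  exact (IsUltrametricDist.norm_add_le_max _ _).trans
    (max_le (Padic.norm_sum_one_div_sq_sub_pow_le hp3.le hF)
      (Padic.norm_sum_range_pow_sub_bernoulli_eval_le hp3 htn))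
end

section
/- For every n ∈ ℕ, one has a_n = Σ_{k=0}^{n} C(n+k,2k)·C(n−k,k)·C(2k,k) and also a_n = Σ_{k=0}^{n} C(n+k,3k)·C(3k,k)·C(2k,k). -/
/-! Both identities hold term by term: each is an instance of trinomial revision
`C(a, b) C(b, c) = C(a, c) C(a - c, b - c)`, which in ℕ needs no side condition beyond `c ≤ b`. -/

/-- The sequence `a_n = ∑_{k=0}^n C(n,k) C(n-k,k) C(n+k,k)`. -/
def seqA (n : ℕ) : ℕ :=
  ∑ k ∈ Finset.range (n + 1), Nat.choose n k * Nat.choose (n - k) k * Nat.choose (n + k) k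

namespace Nat

theorem add_choose_mul_choose (m k : ℕ) :
    (m + k).choose k * m.choose k = (m + k).choose (2 * k) * (2 * k).choose k := by
  have h := choose_mul (n := m + k) (k := 2 * k) (s := k) (by omega)
  rw [show 2 * k - k = k by omega, Nat.add_sub_cancel] at h
  exact h.symm

theorem add_choose_two_mul_mul_choose_sub (m k : ℕ) :
    (m + k).choose (2 * k) * (m - k).choose k = (m + k).choose (3 * k) * (3 * k).choose k := by
  have h := choose_mul (n := m + k) (k := 3 * k) (s := 2 * k) (by omega)
  rw [show 3 * k - 2 * k = k by omega, show m + k - 2 * k = m - k by omega,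
    choose_symm_of_eq_add (by omega : 3 * k = 2 * k + k)] at h
  exact h.symm

end Nat

theorem seqA_alternative_forms (n : ℕ) :
    (seqA n = ∑ k ∈ Finset.range (n + 1),
        Nat.choose (n + k) (2 * k) * Nat.choose (n - k) k * Nat.choose (2 * k) k) ∧
    (seqA n = ∑ k ∈ Finset.range (n + 1),
        Nat.choose (n + k) (3 * k) * Nat.choose (3 * k) k * Nat.choose (2 * k) k) := by
  have first : seqA n = ∑ k ∈ Finset.range (n + 1),
      Nat.choose (n + k) (2 * k) * Nat.choose (n - k) k * Nat.choose (2 * k) k := by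
    refine Finset.sum_congr rfl fun k _ => ?_
    calc n.choose k * (n - k).choose k * (n + k).choose k
        = (n + k).choose k * n.choose k * (n - k).choose k := by ring
      _ = (n + k).choose (2 * k) * (2 * k).choose k * (n - k).choose k := by
          rw [Nat.add_choose_mul_choose]
      _ = _ := by ring
  refine ⟨first, first.trans <| Finset.sum_congr rfl fun k _ => ?_⟩
  rw [Nat.add_choose_two_mul_mul_choose_sub]
end

section
/- In the ring of formal power series ℚ[[x]], the identity Σ_{n≥0} a_n x^n = Σ_{k≥0} C(2k,k)·C(3k,k) · x^{2k} · (1−x)^{−(3k+1)} holds; equivalently, for every n ∈ ℕ, a_n = Σ_{k=0}^{⌊n/2⌋} C(2k,k)·C(3k,k)·C(n+k,3k). -/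
/-- `(1-x)^{-(3k+1)}` as a formal power series, i.e. `∑_{l≥0} C(3k+l,3k) x^l`. -/
noncomputable def invPow (k : ℕ) : PowerSeries ℚ :=
  PowerSeries.mk fun l => (Nat.choose (3 * k + l) (3 * k) : ℚ)

namespace Nat

theorem choose_mul_choose_sub_mul_choose_add (n k : ℕ) :
    n.choose k * (n - k).choose k * (n + k).choose k
      = (2 * k).choose k * (3 * k).choose k * (n + k).choose (3 * k) := by
  have hsplit : n.choose (2 * k) * (2 * k).choose k = n.choose k * (n - k).choose k := by
    simpa [show 2 * k - k = k by omega] using choose_mul (n := n) (by omega : k ≤ 2 * k)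
  have hsplit' : (n + k).choose (3 * k) * (3 * k).choose k
      = (n + k).choose k * n.choose (2 * k) := by
    simpa [show 3 * k - k = 2 * k by omega] using choose_mul (n := n + k) (by omega : k ≤ 3 * k)
  calc n.choose k * (n - k).choose k * (n + k).choose k
      = (2 * k).choose k * ((n + k).choose k * n.choose (2 * k)) := by rw [← hsplit]; ring
    _ = (2 * k).choose k * (3 * k).choose k * (n + k).choose (3 * k) := by rw [← hsplit']; ring

end Nat

theorem seqA_eq_sum_choose (n : ℕ) : seqA n = ∑ k ∈ Finset.range (n / 2 + 1),
    Nat.choose (2 * k) k * Nat.choose (3 * k) k * Nat.choose (n + k) (3 * k) := by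
  simp only [seqA, Nat.choose_mul_choose_sub_mul_choose_add]
  refine (Finset.sum_subset (Finset.range_subset_range.2 (by omega)) fun k _ hk => ?_).symm
  have hlt : n + k < 3 * k := by simp only [Finset.mem_range] at hk; omega
  simp [Nat.choose_eq_zero_of_lt hlt]

theorem coeff_X_pow_mul_invPow (n k : ℕ) :
    PowerSeries.coeff n (PowerSeries.X ^ (2 * k) * invPow k)
      = (Nat.choose (n + k) (3 * k) : ℚ) := by
  rw [PowerSeries.coeff_X_pow_mul', invPow, PowerSeries.coeff_mk]
  split_ifs
  · rw [show 3 * k + (n - 2 * k) = n + k by omega]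
  · rw [Nat.choose_eq_zero_of_lt (by omega), Nat.cast_zero]

/-- The generating-function identity
`∑_{n≥0} a_n x^n = ∑_{k≥0} C(2k,k) C(3k,k) x^{2k} (1-x)^{-(3k+1)}` in `ℚ[[x]]`:
since the `k`-th summand has order at least `2k`, the identity is expressed by saying
that for each `n`, the coefficient of `x^n` on the left equals the (finite) sum over
`k` of the coefficients of `x^n` of the summands; equivalently,
`a_n = ∑_{k=0}^{⌊n/2⌋} C(2k,k) C(3k,k) C(n+k,3k)`. -/
theorem seqA_generating_function (n : ℕ) :
    (PowerSeries.coeff n (PowerSeries.mk fun m => (seqA m : ℚ))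
      = ∑ k ∈ Finset.range (n / 2 + 1),
          PowerSeries.coeff n
            (((Nat.choose (2 * k) k * Nat.choose (3 * k) k : ℚ)) •
              (PowerSeries.X ^ (2 * k) * invPow k))) ∧
    seqA n = ∑ k ∈ Finset.range (n / 2 + 1),
      Nat.choose (2 * k) k * Nat.choose (3 * k) k * Nat.choose (n + k) (3 * k) := by
  refine ⟨?_, seqA_eq_sum_choose n⟩
  simp [coeff_X_pow_mul_invPow, seqA_eq_sum_choose]
end

section
/- Let p > 3 be a prime and let a be a positive integer. Then T_{p^{a−1}−1} ≡ (p/3)^{a−1} (mod p). -/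
/-!
Since `p ^ m - 1` has all its base-`p` digits equal to `p - 1`, `C(p ^ m - 1, 2k) ≡ 1 (mod p)`,
so `T_{p^m-1} ≡ ∑_{k < p^m} C(2k, k)`: the extra terms with `2k ≥ p ^ m` vanish by Kummer's
theorem. By Lucas' theorem this sum is the `m`-th power of `∑_{k < p} C(2k, k)`, and
`C(2k, k) ≡ (-4)^k C((p-1)/2, k)` turns the latter into `(1 - 4)^((p-1)/2)`, which is
`(-3/p) = (p/3)` by Euler's criterion and quadratic reciprocity.
-/

open Finset Nat

theorem Finset.sum_range_mul_eq_sum_sum {M : Type*} [AddCommMonoid M] (f : ℕ → M) (m n : ℕ) :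
    ∑ k ∈ range (m * n), f k = ∑ q ∈ range m, ∑ r ∈ range n, f (q * n + r) := by
  induction m with
  | zero => simp
  | succ m ih => rw [Nat.succ_mul, sum_range_add, ih, sum_range_succ]

namespace Nat

variable {p : ℕ} [hp : Fact p.Prime]

/-- Kummer: adding `k` to itself carries at the `i`-th digit. -/
theorem prime_dvd_centralBinom_of_pow_le {i k : ℕ} (h : p ^ i ≤ 2 * (k % p ^ i)) :
    p ∣ centralBinom k := by
  have hi : i ∈ Ico 1 (log p (2 * k) + 1) := by
    have hk : p ^ i ≤ 2 * k := h.trans (by gcongr; exact mod_le _ _)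
    rcases i.eq_zero_or_pos with rfl | hi
    · simp [Nat.mod_one] at h
    · exact mem_Ico.2 ⟨hi, lt_succ_of_le (le_log_of_pow_le hp.out.one_lt hk)⟩
  apply dvd_of_one_le_padicValNat
  rw [centralBinom_eq_two_mul_choose, padicValNat_choose (by omega) (lt_succ_self _), one_le_card]
  exact ⟨i, mem_filter.2 ⟨hi, by rwa [two_mul, Nat.add_sub_cancel, ← two_mul]⟩⟩

theorem prime_dvd_centralBinom_of_lt_pow {m k : ℕ} (hk : k < p ^ m) (h : p ^ m ≤ 2 * k) :
    p ∣ centralBinom k :=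
  prime_dvd_centralBinom_of_pow_le (i := m) (by rwa [mod_eq_of_lt hk])

end Nat

namespace ZMod

variable {p : ℕ} [hp : Fact p.Prime]

theorem natCast_centralBinom_mul_add {q r : ℕ} (hr : r < p) :
    (centralBinom (q * p + r) : ZMod p) = centralBinom q * centralBinom r := by
  have hp0 := hp.out.pos
  rcases lt_or_ge (2 * r) p with h | h
  · have lucas := Choose.choose_modEq_choose_mod_mul_choose_div_nat (p := p)
      (n := 2 * r + 2 * q * p) (k := r + q * p)
    simp only [add_mul_mod_self_right, add_mul_div_right _ _ hp0, mod_eq_of_lt h,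
      mod_eq_of_lt hr, div_eq_of_lt h, div_eq_of_lt hr, zero_add] at lucas
    rw [centralBinom_eq_two_mul_choose, centralBinom_eq_two_mul_choose,
      centralBinom_eq_two_mul_choose, show 2 * (q * p + r) = 2 * r + 2 * q * p by ring,
      add_comm (q * p), (natCast_eq_natCast_iff _ _ _).2 lucas]
    push_cast
    ring
  · -- both sides vanish: adding `r` to itself carries in base `p`
    have carry {k : ℕ} (hk : k % p = r) : (centralBinom k : ZMod p) = 0 :=
      (natCast_eq_zero_iff _ _).2 <| prime_dvd_centralBinom_of_pow_le (i := 1) (by simpa [hk])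
    rw [carry (by simp [add_comm (q * p), mod_eq_of_lt hr]), carry (mod_eq_of_lt hr), mul_zero]

theorem sum_centralBinom_range_pow (m : ℕ) :
    ∑ k ∈ range (p ^ m), (centralBinom k : ZMod p) =
      (∑ k ∈ range p, (centralBinom k : ZMod p)) ^ m := by
  induction m with
  | zero => simp
  | succ m ih =>
    rw [pow_succ, sum_range_mul_eq_sum_sum, pow_succ, ← ih, sum_mul_sum]
    exact sum_congr rfl fun q _ ↦ sum_congr rfl fun r hr ↦
      natCast_centralBinom_mul_add (mem_range.1 hr)

theorem natCast_centralBinom_eq_neg_four_pow_mul_choose (hp2 : p ≠ 2) {k : ℕ} (hk : k < p) :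
    (centralBinom k : ZMod p) = (-4) ^ k * (p / 2).choose k := by
  induction k with
  | zero => simp
  | succ k ih =>
    have hodd := Nat.odd_iff.1 (hp.out.odd_of_ne_two hp2)
    have hk1 : ((k + 1 : ℕ) : ZMod p) ≠ 0 := by
      rw [Ne, natCast_eq_zero_iff]
      exact fun h ↦ absurd (le_of_dvd (succ_pos k) h) (by omega)
    -- `2 * (2 * k + 1) ≡ -4 * (p / 2 - k)` because `2 * (p / 2) + 1 = p`
    have step : (2 * (2 * k + 1) : ZMod p) * (p / 2).choose k =
        -4 * ((p / 2).choose k * ((p / 2 - k : ℕ) : ZMod p)) := by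
      rcases le_or_gt k (p / 2) with h | h
      · have hp0 : ((2 * (p / 2) + 1 : ℕ) : ZMod p) = 0 := by
          rw [show 2 * (p / 2) + 1 = p by omega, natCast_self]
        push_cast [Nat.cast_sub h] at hp0 ⊢
        linear_combination 2 * ((p / 2).choose k : ZMod p) * hp0
      · simp [choose_eq_zero_of_lt h]
    apply mul_left_cancel₀ hk1
    calc ((k + 1 : ℕ) : ZMod p) * centralBinom (k + 1) = 2 * (2 * k + 1) * centralBinom k := by
          rw [← Nat.cast_mul, succ_mul_centralBinom_succ]
          push_cast
          ring
      _ = (-4) ^ (k + 1) * ((p / 2).choose k * ((p / 2 - k : ℕ) : ZMod p)) := by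
          rw [ih (by omega)]
          linear_combination (-4 : ZMod p) ^ k * step
      _ = ((k + 1 : ℕ) : ZMod p) * ((-4) ^ (k + 1) * (p / 2).choose (k + 1)) := by
          rw [← Nat.cast_mul, ← choose_succ_right_eq]
          push_cast
          ring

theorem sum_centralBinom_range_prime (hp2 : p ≠ 2) :
    ∑ k ∈ range p, (centralBinom k : ZMod p) = (-3) ^ (p / 2) := by
  have hodd := Nat.odd_iff.1 (hp.out.odd_of_ne_two hp2)
  calc ∑ k ∈ range p, (centralBinom k : ZMod p)
      = ∑ k ∈ range p, (-4) ^ k * ((p / 2).choose k : ZMod p) :=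
        sum_congr rfl fun k hk ↦
          natCast_centralBinom_eq_neg_four_pow_mul_choose hp2 (mem_range.1 hk)
    _ = ∑ k ∈ range (p / 2 + 1), (-4) ^ k * ((p / 2).choose k : ZMod p) := by
        refine (sum_subset (range_subset_range.2 (by omega)) fun k _ hk ↦ ?_).symm
        rw [choose_eq_zero_of_lt (by simpa using hk), Nat.cast_zero, mul_zero]
    _ = (-4 + 1) ^ (p / 2) := by simp [add_pow]
    _ = (-3) ^ (p / 2) := by norm_num

theorem natCast_choose_pow_sub_one {m j : ℕ} (hj : j < p ^ m) :
    ((p ^ m - 1).choose j : ZMod p) = (-1) ^ j := by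
  induction j with
  | zero => simp
  | succ j ih =>
    have pascal : ((p ^ m).choose (j + 1) : ZMod p) =
        (p ^ m - 1).choose j + (p ^ m - 1).choose (j + 1) := by
      rw [← Nat.cast_add, ← choose_succ_succ', Nat.sub_add_cancel (by omega)]
    rw [(natCast_eq_zero_iff _ _).2 (hp.out.dvd_choose_pow (succ_ne_zero j) hj.ne),
      ih (by omega)] at pascal
    linear_combination -pascal

theorem natCast_centralTrinomial_pow_sub_one (m : ℕ) :
    (centralTrinomial (p ^ m - 1) : ZMod p) =
      ∑ k ∈ range (p ^ m), (centralBinom k : ZMod p) := by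
  have hpm : 1 ≤ p ^ m := one_le_pow _ _ hp.out.pos
  rw [centralTrinomial, Nat.cast_sum]
  calc _ = ∑ k ∈ range ((p ^ m - 1) / 2 + 1), (centralBinom k : ZMod p) :=
        sum_congr rfl fun k hk ↦ by
          rw [Nat.cast_mul, natCast_choose_pow_sub_one (by have := mem_range.1 hk; omega),
            pow_mul, neg_one_sq, one_pow, one_mul, centralBinom_eq_two_mul_choose]
    _ = _ := sum_subset (range_subset_range.2 (by omega)) fun k hk hk' ↦
        (natCast_eq_zero_iff _ _).2 <|
          prime_dvd_centralBinom_of_lt_pow (mem_range.1 hk)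
            (by have := mem_range.not.1 hk'; omega)

end ZMod

theorem legendreSym_three_eq_neg_three {p : ℕ} [hp : Fact p.Prime] (hp2 : p ≠ 2) :
    legendreSym 3 p = legendreSym p (-3) := by
  rw [legendreSym.quadratic_reciprocity' hp2 (by decide), show (-3 : ℤ) = -1 * 3 by norm_num,
    legendreSym.mul, legendreSym.at_neg_one hp2,
    ZMod.χ₄_eq_neg_one_pow (Nat.odd_iff.1 (hp.out.odd_of_ne_two hp2))]
  norm_num

theorem trinomial_prime_power_sub_one_general (p : ℕ) [hp : Fact p.Prime] (hp3 : 3 < p)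
    (a : ℕ) :
    (centralTrinomial (p ^ (a - 1) - 1) : ℤ) ≡ (legendreSym 3 p) ^ (a - 1) [ZMOD p] := by
  have hp2 : p ≠ 2 := by omega
  rw [← ZMod.intCast_eq_intCast_iff]
  push_cast
  rw [ZMod.natCast_centralTrinomial_pow_sub_one, ZMod.sum_centralBinom_range_pow,
    ZMod.sum_centralBinom_range_prime hp2, legendreSym_three_eq_neg_three hp2, legendreSym.eq_pow]
  norm_num

theorem trinomial_prime_power_sub_one (p : ℕ) [hp : Fact p.Prime] (hp3 : 3 < p)
    (a : ℕ) (ha : 0 < a) :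
    (centralTrinomial (p ^ (a - 1) - 1) : ℤ) ≡ (legendreSym 3 p) ^ (a - 1) [ZMOD p] :=
  trinomial_prime_power_sub_one_general p (hp := hp) hp3 a
end

section
/- Let p be a prime, n a positive integer, and k an integer with 0 < k ≤ pn and p ∤ k. Then, in ℤ_p, C(pn,k) ≡ (pn/k) · (−1)^{δ_k} · C(n−1, ⌊(k−1)/p⌋) (mod p^{2+2ν_p(n)}), where δ_k = #{j : 0 < j < k, p ∤ j} and ν_p(n) is the p-adic valuation of n; i.e., the p-adic valuation of the rational number C(pn,k) − (pn/k)(−1)^{δ_k} C(n−1, ⌊(k−1)/p⌋) is at least 2 + 2ν_p(n). -/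
/-!
Write `C(pn, k) = (pn / k) ∏_{0<j<k} (pn - j) / j`. The factors with `j = pm` are `(n - m) / m`
and multiply to `C(n - 1, ⌊(k - 1)/p⌋)`. Each remaining factor is `-(1 - pn / j)` with `j` a
`p`-adic unit, so these contribute `(-1)^δ_k` times a product that is `≡ 1 mod pn`. The difference
is therefore `(pn / k) (-1)^δ_k C(n - 1, ⌊(k - 1)/p⌋)` times an element of `pn ℤ_p`, of norm at
most `‖pn‖² = p^(-2 - 2 ν_p(n))`.
-/

open Finset

theorem Nat.Ioo_filter_dvd_eq_image (p k : ℕ) :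
    (Ioo 0 k).filter (p ∣ ·) = (Icc 1 ((k - 1) / p)).image (p * ·) := by
  ext j
  simp only [mem_filter, mem_Ioo, mem_image, mem_Icc]
  constructor
  · rintro ⟨⟨hj0, hjk⟩, m, rfl⟩
    refine ⟨m, ⟨Nat.pos_of_mul_pos_left hj0, ?_⟩, rfl⟩
    exact (Nat.le_div_iff_mul_le (Nat.pos_of_mul_pos_right hj0)).2 (by rw [mul_comm]; omega)
  · rintro ⟨m, ⟨hm1, hmM⟩, rfl⟩
    rcases p.eq_zero_or_pos with rfl | hp
    · simp at hmM; omega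
    have hpm : 0 < p * m := by positivity
    have := (Nat.mul_le_mul_left p hmM).trans (Nat.mul_div_le (k - 1) p)
    exact ⟨⟨hpm, by omega⟩, dvd_mul_right p m⟩

section ChooseProducts

variable {K : Type*} [Field K] [CharZero K]

theorem Nat.cast_choose_eq_prod_Icc (a m : ℕ) :
    (a.choose m : K) = ∏ j ∈ Icc 1 m, ((a : K) + 1 - j) / j := by
  rw [Nat.cast_choose_eq_descPochhammer_div, descPochhammer_eval_eq_prod_range,
    ← prod_range_add_one_eq_factorial, Nat.cast_prod, ← prod_div_distrib,
    ← Ico_add_one_right_eq_Icc, prod_Ico_eq_prod_range, Nat.add_sub_cancel]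
  refine prod_congr rfl fun j _ => ?_
  push_cast
  ring_nf

theorem Nat.cast_choose_eq_div_mul_prod_Ioo (N : ℕ) {k : ℕ} (hk : 0 < k) :
    (N.choose k : K) = N / k * ∏ j ∈ Ioo 0 k, ((N : K) - j) / j := by
  obtain ⟨m, rfl⟩ := Nat.exists_eq_add_of_lt hk
  obtain _ | a := N
  · simp
  have hIoo : Ioo 0 (0 + m + 1) = Icc 1 m := by ext; simp; omega
  have hrec := congrArg (Nat.cast : ℕ → K) (Nat.add_one_mul_choose_eq a m)
  push_cast at hrec ⊢
  rw [hIoo, ← Nat.cast_choose_eq_prod_Icc, zero_add]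
  field_simp
  linear_combination -hrec

theorem prod_Ioo_filter_dvd_eq_choose {p n : ℕ} (hp : p ≠ 0) (hn : 0 < n) (k : ℕ) :
    ∏ j ∈ (Ioo 0 k).filter (p ∣ ·), ((p : K) * n - j) / j
      = ((n - 1).choose ((k - 1) / p) : K) := by
  rw [Nat.Ioo_filter_dvd_eq_image, prod_image fun _ _ _ _ h => Nat.eq_of_mul_eq_mul_left
    (Nat.pos_of_ne_zero hp) h, Nat.cast_choose_eq_prod_Icc]
  refine prod_congr rfl fun m hm => ?_
  have hm0 : (m : K) ≠ 0 := Nat.cast_ne_zero.2 (by simp at hm; omega)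
  have hp0 : (p : K) ≠ 0 := Nat.cast_ne_zero.2 hp
  push_cast [Nat.cast_sub hn]
  field_simp
  ring

theorem prod_sub_div_eq_neg_one_pow_mul_prod {s : Finset ℕ} (hs : 0 ∉ s) (x : K) :
    ∏ j ∈ s, (x - j) / j = (-1) ^ s.card * ∏ j ∈ s, (1 - x / j) := by
  rw [← prod_const, ← prod_mul_distrib]
  refine prod_congr rfl fun j hj => ?_
  have hj0 : (j : K) ≠ 0 := Nat.cast_ne_zero.2 (ne_of_mem_of_not_mem hj hs)
  field_simp
  ring

theorem Nat.cast_choose_mul_eq_mul_prod_one_sub {p n k : ℕ} (hp : p ≠ 0) (hn : 0 < n)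
    (hk : 0 < k) :
    ((p * n).choose k : K) = p * n / k * (-1) ^ ((Ioo 0 k).filter (¬ p ∣ ·)).card
      * ((n - 1).choose ((k - 1) / p) : K)
      * ∏ j ∈ (Ioo 0 k).filter (¬ p ∣ ·), (1 - p * n / (j : K)) := by
  rw [Nat.cast_choose_eq_div_mul_prod_Ioo _ hk, Nat.cast_mul,
    ← prod_filter_mul_prod_filter_not _ (p ∣ ·), prod_Ioo_filter_dvd_eq_choose hp hn,
    prod_sub_div_eq_neg_one_pow_mul_prod (by simp)]
  ring

end ChooseProducts

theorem IsUltrametricDist.norm_prod_one_sub_sub_one_le {ι R : Type*} [NormedCommRing R]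
    [NormOneClass R] [IsUltrametricDist R] (s : Finset ι) (x : ι → R) {ε : ℝ} (hε0 : 0 ≤ ε)
    (hε1 : ε ≤ 1) (hx : ∀ i ∈ s, ‖x i‖ ≤ ε) :
    ‖∏ i ∈ s, (1 - x i) - 1‖ ≤ ε := by
  classical
  induction s using Finset.induction with
  | empty => simpa using hε0
  | insert a s ha ih =>
    rw [prod_insert ha]
    have hxa := hx a (mem_insert_self a s)
    have ih := ih fun i hi => hx i (mem_insert_of_mem hi)
    have h1a : ‖1 - x a‖ ≤ 1 := by
      rw [sub_eq_add_neg]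
      exact (norm_add_le_max _ _).trans (max_le norm_one.le (by rw [norm_neg]; linarith))
    calc ‖(1 - x a) * ∏ i ∈ s, (1 - x i) - 1‖
        = ‖(1 - x a) * (∏ i ∈ s, (1 - x i) - 1) + -x a‖ := by ring_nf
      _ ≤ max ‖(1 - x a) * (∏ i ∈ s, (1 - x i) - 1)‖ ‖-x a‖ := norm_add_le_max _ _
      _ ≤ ε := max_le ((norm_mul_le _ _).trans (by nlinarith [norm_nonneg (1 - x a)]))
        (by rwa [norm_neg])

theorem Padic.norm_natCast_eq_zpow {p : ℕ} [Fact p.Prime] {n : ℕ} (hn : n ≠ 0) :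
    ‖(n : ℚ_[p])‖ = (p : ℝ) ^ (-(padicValNat p n : ℤ)) := by
  rw [Padic.norm_eq_zpow_neg_valuation (Nat.cast_ne_zero.2 hn), Padic.valuation_natCast]

theorem binom_pn_k_congruence_general (p : ℕ) [hp : Fact p.Prime] (n : ℕ) (hn : 0 < n)
    (k : ℕ) (hk0 : 0 < k) (hpk : ¬ p ∣ k) :
    ‖(((Nat.choose (p * n) k : ℚ)
        - (p * n : ℚ) / (k : ℚ) * (-1) ^ (((Finset.Ioo 0 k).filter fun j => ¬ p ∣ j).card)
            * (Nat.choose (n - 1) ((k - 1) / p) : ℚ) : ℚ) : ℚ_[p])‖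
      ≤ (p : ℝ) ^ (-(2 + 2 * (padicValNat p n : ℤ))) := by
  have hp0 := hp.out.ne_zero
  simp only [Rat.cast_sub, Rat.cast_mul, Rat.cast_div, Rat.cast_pow, Rat.cast_neg, Rat.cast_one,
    Rat.cast_natCast]
  rw [Nat.cast_choose_mul_eq_mul_prod_one_sub hp0 hn hk0, ← mul_sub_one]
  set N : ℚ_[p] := (p : ℚ_[p]) * n
  set S := (Ioo 0 k).filter (¬ p ∣ ·)
  have hN : ‖N‖ = (p : ℝ) ^ (-(1 + padicValNat p n : ℤ)) := by
    rw [show N = ((p * n : ℕ) : ℚ_[p]) from (Nat.cast_mul p n).symm,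
      Padic.norm_natCast_eq_zpow (by positivity), padicValNat.mul hp0 hn.ne', padicValNat_self,
      Nat.cast_add, Nat.cast_one]
  have hunit {j : ℕ} (hj : ¬ p ∣ j) : ‖(j : ℚ_[p])‖ = 1 :=
    Padic.norm_natCast_eq_one_iff.2 ((Nat.Prime.coprime_iff_not_dvd hp.out).2 hj)
  have htail : ‖∏ j ∈ S, (1 - N / j) - 1‖ ≤ ‖N‖ :=
    IsUltrametricDist.norm_prod_one_sub_sub_one_le S _ (norm_nonneg N)
      (hN ▸ zpow_le_one_of_nonpos₀ (by exact_mod_cast hp.out.one_le) (by omega))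
      fun j hj => by rw [norm_div, hunit (mem_filter.1 hj).2, div_one]
  calc _ ≤ ‖N‖ * ‖N‖ := by
        simp only [norm_mul, norm_div, norm_pow, norm_neg, norm_one, one_pow, hunit hpk, div_one,
          mul_one]
        exact mul_le_mul (mul_le_of_le_one_right (norm_nonneg _)
          (IsUltrametricDist.norm_natCast_le_one ℚ_[p] _)) htail (norm_nonneg _) (norm_nonneg _)
    _ = (p : ℝ) ^ (-(2 + 2 * (padicValNat p n : ℤ))) := by
        rw [hN, ← zpow_add₀ (by exact_mod_cast hp0)]
        ring_nf

theorem binom_pn_k_congruence (p : ℕ) [hp : Fact p.Prime] (n : ℕ) (hn : 0 < n)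
    (k : ℕ) (hk0 : 0 < k) (hk : k ≤ p * n) (hpk : ¬ p ∣ k) :
    ‖(((Nat.choose (p * n) k : ℚ)
        - (p * n : ℚ) / (k : ℚ) * (-1) ^ (((Finset.Ioo 0 k).filter fun j => ¬ p ∣ j).card)
            * (Nat.choose (n - 1) ((k - 1) / p) : ℚ) : ℚ) : ℚ_[p])‖
      ≤ (p : ℝ) ^ (-(2 + 2 * (padicValNat p n : ℤ))) :=
  binom_pn_k_congruence_general p (hp := hp) n hn k hk0 hpk
end
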